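/- arXiv:1107.0176 — 4 statements merged into one kernel-verified Lean document; each statement's English description precedes it below -/
import Mathlib

section
/- Let H and G be simple graphs and let φ : H → G be a locally surjective graph homomorphism. Let e = {u, v} be an edge of G. Say that an edge {x, y} of H represents e if {φ(x), φ(y)} = {u, v}. Then φ (on the same vertex sets) is a locally surjective graph homomorphism from the graph obtained from H by deleting all edges that represent e to the graph obtained from G by deleting the edge e. -/
namespace SimpleGraph

variable {V W : Type*} {H : SimpleGraph V} {G : SimpleGraph W}

lemma Hom.adj_deleteEdges_of_adj_deleteEdges_preimage (φ : H →g G) (s : Set (Sym2 W)) {a b : V}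
    (hab : (H.deleteEdges (Sym2.map φ ⁻¹' s)).Adj a b) :
    (G.deleteEdges s).Adj (φ a) (φ b) := by
  rw [deleteEdges_adj] at hab ⊢
  exact ⟨φ.map_adj hab.1, hab.2⟩

/-- An `H`-edge at `x` lifting a surviving `G`-edge is itself mapped onto that edge, so it
survives the deletion of all preimages of `s`. -/
lemma Hom.surjOn_neighborSet_deleteEdges_preimage (φ : H →g G) (s : Set (Sym2 W)) {x : V}
    (hx : Set.SurjOn φ (H.neighborSet x) (G.neighborSet (φ x))) :
    Set.SurjOn φ ((H.deleteEdges (Sym2.map φ ⁻¹' s)).neighborSet x)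
      ((G.deleteEdges s).neighborSet (φ x)) := by
  intro w hw
  rw [mem_neighborSet, deleteEdges_adj] at hw
  obtain ⟨y, hxy, rfl⟩ := hx hw.1
  refine ⟨y, ?_, rfl⟩
  rw [mem_neighborSet, deleteEdges_adj]
  exact ⟨hxy, hw.2⟩

end SimpleGraph

theorem emulator_delete_edge_general
    {V W : Type*} (H : SimpleGraph V) (G : SimpleGraph W) (φ : H →g G)
    (hls : ∀ x : V, Set.SurjOn ⇑φ (H.neighborSet x) (G.neighborSet (φ x)))
    (u v : W) :
    (∀ a b : V,
        (H.deleteEdges {e : Sym2 V | Sym2.map ⇑φ e = s(u, v)}).Adj a b →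
          (G.deleteEdges {s(u, v)}).Adj (φ a) (φ b)) ∧
    (∀ x : V,
        Set.SurjOn ⇑φ
          ((H.deleteEdges {e : Sym2 V | Sym2.map ⇑φ e = s(u, v)}).neighborSet x)
          ((G.deleteEdges {s(u, v)}).neighborSet (φ x))) :=
  ⟨fun _ _ => φ.adj_deleteEdges_of_adj_deleteEdges_preimage {s(u, v)},
    fun x => φ.surjOn_neighborSet_deleteEdges_preimage {s(u, v)} (hls x)⟩

/-- If `φ : H → G` is a locally surjective graph homomorphism (an emulator projection)
and `e = {u,v}` is an edge of `G`, then `φ` (on the same vertex sets) is a locally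
surjective graph homomorphism from the graph obtained from `H` by deleting all edges
representing `e` (i.e. edges `{x,y}` with `{φ x, φ y} = {u,v}`) to the graph obtained
from `G` by deleting the edge `e`. -/
theorem emulator_delete_edge
    {V W : Type*} (H : SimpleGraph V) (G : SimpleGraph W) (φ : H →g G)
    (hls : ∀ x : V, Set.SurjOn ⇑φ (H.neighborSet x) (G.neighborSet (φ x)))
    (u v : W) (huv : G.Adj u v) :
    (∀ a b : V,
        (H.deleteEdges {e : Sym2 V | Sym2.map ⇑φ e = s(u, v)}).Adj a b →
          (G.deleteEdges {s(u, v)}).Adj (φ a) (φ b)) ∧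
    (∀ x : V,
        Set.SurjOn ⇑φ
          ((H.deleteEdges {e : Sym2 V | Sym2.map ⇑φ e = s(u, v)}).neighborSet x)
          ((G.deleteEdges {s(u, v)}).neighborSet (φ x))) :=
  emulator_delete_edge_general H G φ hls u v
end

section
/- Let H and G be simple graphs, let φ : H → G be a locally surjective graph homomorphism, and let v be a vertex of G of degree exactly 3. Suppose every vertex in the fiber φ⁻¹(v) has degree exactly 3 in H. Define the YΔ-transform G' of G at v as the simple graph on V(G) \ {v} in which two distinct vertices u, w are adjacent if and only if they are adjacent in G, or both u and w are neighbors of v in G. Define H' as the simple graph on V(H) \ φ⁻¹(v) in which two distinct vertices a, b are adjacent if and only if they are adjacent in H, or there exists x ∈ φ⁻¹(v) adjacent in H to both a and b. Then the restriction of φ to V(H) \ φ⁻¹(v) is a locally surjective graph homomorphism from H' to G'. -/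
/-!
A fiber vertex `x` has as many neighbors as `v`, and `φ` maps them onto the neighbors of `v`,
so it maps them bijectively. Hence the two ends of a new edge of `H'` through `x` have distinct
images, both adjacent to `v`, which form an edge of `G'`. For local surjectivity, an edge of `G'`
at `φ a` that is already in `G` lifts directly, while a new edge `φ a, u` through `v` lifts in
two steps: first `v` to a fiber vertex `x` next to `a`, then `u` to a neighbor of `x`.
-/

/-- The `YΔ`-transform of a simple graph `G` at a vertex `v`: the simple graph on
`V(G) \ {v}` in which two distinct vertices are adjacent iff they are adjacent in `G`,
or both are neighbors of `v` in `G`. -/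
def ydeltaTransform {W : Type*} (G : SimpleGraph W) (v : W) :
    SimpleGraph {w : W // w ≠ v} where
  Adj a b := a ≠ b ∧ (G.Adj a.1 b.1 ∨ (G.Adj v a.1 ∧ G.Adj v b.1))
  symm := ⟨fun a b h => ⟨h.1.symm, h.2.elim (fun h' => Or.inl h'.symm) (fun h' => Or.inr ⟨h'.2, h'.1⟩)⟩⟩
  loopless := ⟨fun a h => h.1 rfl⟩

/-- The simultaneous `YΔ`-transform of `H` at all vertices of the fiber `φ⁻¹(v)`:
the simple graph on `V(H) \ φ⁻¹(v)` in which two distinct vertices are adjacent iff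
they are adjacent in `H`, or some vertex of the fiber `φ⁻¹(v)` is adjacent in `H`
to both of them. -/
def ydeltaFiberTransform {V W : Type*} (H : SimpleGraph V) (φ : V → W) (v : W) :
    SimpleGraph {x : V // φ x ≠ v} where
  Adj a b := a ≠ b ∧ (H.Adj a.1 b.1 ∨ ∃ x : V, φ x = v ∧ H.Adj x a.1 ∧ H.Adj x b.1)
  symm := ⟨fun a b h => ⟨h.1.symm, h.2.elim (fun h' => Or.inl h'.symm)
    (fun ⟨x, hx, h1, h2⟩ => Or.inr ⟨x, hx, h2, h1⟩)⟩⟩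
  loopless := ⟨fun a h => h.1 rfl⟩

theorem Set.SurjOn.injOn_of_ncard_le {α β : Type*} {f : α → β} {s : Set α} {t : Set β}
    (hsurj : Set.SurjOn f s t) (hmaps : Set.MapsTo f s t) (hle : s.ncard ≤ t.ncard)
    (hs : s.Finite) : Set.InjOn f s := by
  have himage : f '' s = t := hsurj.image_eq_of_mapsTo hmaps
  exact Set.injOn_of_ncard_image_eq
    (le_antisymm (Set.ncard_image_le hs) (himage ▸ hle)) hs

section YDelta

variable {V W : Type*} {H : SimpleGraph V} {G : SimpleGraph W}

abbrev restrictFiberCompl (φ : H →g G) (v : W) : {x : V // φ x ≠ v} → {w : W // w ≠ v} :=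
  Subtype.map φ fun _ => id

theorem ydeltaFiberTransform_adj_map (φ : H →g G) (v : W)
    (hinj : ∀ x, φ x = v → Set.InjOn φ (H.neighborSet x)) {a b : {x : V // φ x ≠ v}}
    (hab : (ydeltaFiberTransform H φ v).Adj a b) :
    (ydeltaTransform G v).Adj (restrictFiberCompl φ v a) (restrictFiberCompl φ v b) := by
  obtain ⟨hne, hadj | ⟨x, hxv, hxa, hxb⟩⟩ := hab
  · have hφadj := φ.map_adj hadj
    exact ⟨fun h => hφadj.ne (congrArg Subtype.val h), Or.inl hφadj⟩
  · have hφne : φ a.1 ≠ φ b.1 := fun h => hne (Subtype.ext (hinj x hxv hxa hxb h))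
    have hva := φ.map_adj hxa
    have hvb := φ.map_adj hxb
    rw [hxv] at hva hvb
    exact ⟨fun h => hφne (congrArg Subtype.val h), Or.inr ⟨hva, hvb⟩⟩

theorem ydeltaFiberTransform_surjOn_neighborSet (φ : H →g G) (v : W)
    (hls : ∀ x, Set.SurjOn φ (H.neighborSet x) (G.neighborSet (φ x))) (a : {x : V // φ x ≠ v}) :
    Set.SurjOn (restrictFiberCompl φ v) ((ydeltaFiberTransform H φ v).neighborSet a)
      ((ydeltaTransform G v).neighborSet (restrictFiberCompl φ v a)) := by
  rintro ⟨u, huv⟩ ⟨hne, hadj⟩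
  have hlift : ∀ b : V, φ b = u → (H.Adj a.1 b ∨ ∃ x, φ x = v ∧ H.Adj x a.1 ∧ H.Adj x b) →
      (⟨u, huv⟩ : {w : W // w ≠ v}) ∈
        restrictFiberCompl φ v '' (ydeltaFiberTransform H φ v).neighborSet a := by
    rintro b rfl hb
    exact ⟨⟨b, huv⟩, ⟨fun h => hne (congrArg (restrictFiberCompl φ v) h), hb⟩, rfl⟩
  rcases hadj with hGadj | ⟨hva, hvu⟩
  · obtain ⟨b, hab, hbu⟩ := hls a.1 hGadj
    exact hlift b hbu (Or.inl hab)
  · obtain ⟨x, hax, hxv⟩ := hls a.1 hva.symm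
    have hxu : G.Adj (φ x) u := hxv ▸ hvu
    obtain ⟨b, hxb, hbu⟩ := hls x hxu
    exact hlift b hbu (Or.inr ⟨x, hxv, hax.symm, hxb⟩)

end YDelta

/-- If `φ : H → G` is a locally surjective graph homomorphism (an emulator projection),
`v` is a vertex of `G` of degree exactly `3`, and every vertex of the fiber `φ⁻¹(v)`
has degree exactly `3` in `H`, then the restriction of `φ` to `V(H) \ φ⁻¹(v)` is a
locally surjective graph homomorphism from the simultaneous `YΔ`-transform of `H` at
the fiber `φ⁻¹(v)` to the `YΔ`-transform of `G` at `v`. -/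
theorem emulator_ydelta
    {V W : Type*} (H : SimpleGraph V) (G : SimpleGraph W) (φ : H →g G)
    (hls : ∀ x : V, Set.SurjOn ⇑φ (H.neighborSet x) (G.neighborSet (φ x)))
    (v : W) (hdegv : (G.neighborSet v).ncard = 3)
    (hfib : ∀ x : V, φ x = v → (H.neighborSet x).ncard = 3) :
    (∀ a b : {x : V // φ x ≠ v},
        (ydeltaFiberTransform H ⇑φ v).Adj a b →
          (ydeltaTransform G v).Adj ⟨φ a.1, a.2⟩ ⟨φ b.1, b.2⟩) ∧
    (∀ a : {x : V // φ x ≠ v},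
        Set.SurjOn (fun x : {x : V // φ x ≠ v} => (⟨φ x.1, x.2⟩ : {w : W // w ≠ v}))
          ((ydeltaFiberTransform H ⇑φ v).neighborSet a)
          ((ydeltaTransform G v).neighborSet ⟨φ a.1, a.2⟩)) := by
  have hinj : ∀ x, φ x = v → Set.InjOn φ (H.neighborSet x) := fun x hxv =>
    (hls x).injOn_of_ncard_le (fun _ => φ.map_adj) (by rw [hfib x hxv, hxv, hdegv])
      (Set.finite_of_ncard_pos (by rw [hfib x hxv]; norm_num))
  exact ⟨fun _ _ => ydeltaFiberTransform_adj_map φ v hinj,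
    ydeltaFiberTransform_surjOn_neighborSet φ v hls⟩
end

section
/- Let H and G be simple graphs, let φ : H → G be a locally surjective graph homomorphism, and let y₁ ≠ y₂ be vertices of H with φ(y₁) = φ(y₂). Define H' as the simple graph on V(H) \ {y₂} in which two distinct vertices a, b are adjacent if and only if they are adjacent in H, or (a = y₁ and b is adjacent to y₂ in H), or (b = y₁ and a is adjacent to y₂ in H). Then the restriction of φ to V(H) \ {y₂} is a locally surjective graph homomorphism from H' to G. (Note that y₁ and y₂ are nonadjacent in H since they have the same image, so H' has no loop at y₁.) -/
/-! A neighbour of `a` that gets deleted is `y₂`, and `y₁` takes its place: it has the same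
image, it is adjacent to `a` in the merged graph, and it differs from `a` because adjacent
vertices of `H` have distinct images in the loopless graph `G`. -/

/-- Merging the vertex `y₂` into the vertex `y₁`: the simple graph on `V(H) \ {y₂}`
in which two distinct vertices `a, b` are adjacent iff they are adjacent in `H`, or
`a = y₁` and `b` is adjacent to `y₂` in `H`, or `b = y₁` and `a` is adjacent to `y₂`
in `H`. -/
def mergeVertices {V : Type*} (H : SimpleGraph V) (y₁ y₂ : V) :
    SimpleGraph {x : V // x ≠ y₂} where
  Adj a b := a ≠ b ∧ (H.Adj a.1 b.1 ∨ (a.1 = y₁ ∧ H.Adj y₂ b.1) ∨ (b.1 = y₁ ∧ H.Adj y₂ a.1))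
  symm := ⟨fun a b h => ⟨h.1.symm, h.2.elim (fun h' => Or.inl h'.symm)
    (fun h' => Or.inr h'.symm)⟩⟩
  loopless := ⟨fun a h => h.1 rfl⟩

namespace SimpleGraph

variable {V W : Type*} {H : SimpleGraph V} {G : SimpleGraph W} {y₁ y₂ : V}

lemma mergeVertices_adj_of_adj {a b : {x : V // x ≠ y₂}} (h : H.Adj a.1 b.1) :
    (mergeVertices H y₁ y₂).Adj a b :=
  ⟨fun hab => H.ne_of_adj h (congrArg Subtype.val hab), Or.inl h⟩

lemma mergeVertices_adj_of_adj_right {a : {x : V // x ≠ y₂}} (hne : y₁ ≠ y₂) (ha : a.1 ≠ y₁)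
    (h : H.Adj a.1 y₂) : (mergeVertices H y₁ y₂).Adj a ⟨y₁, hne⟩ :=
  ⟨fun h' => ha (congrArg Subtype.val h'), Or.inr (Or.inr ⟨rfl, h.symm⟩)⟩

lemma Hom.ne_of_adj_of_map_eq (φ : H →g G) {x y z : V} (h : H.Adj x y) (heq : φ z = φ y) :
    x ≠ z := by
  rintro rfl
  exact (φ.map_adj h).ne heq

lemma Hom.map_adj_of_mergeVertices_adj (φ : H →g G) (heq : φ y₁ = φ y₂)
    {a b : {x : V // x ≠ y₂}} (h : (mergeVertices H y₁ y₂).Adj a b) :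
    G.Adj (φ a.1) (φ b.1) := by
  obtain ⟨-, h | ⟨ha, hb⟩ | ⟨hb, ha⟩⟩ := h
  · exact φ.map_adj h
  · rw [ha, heq]
    exact φ.map_adj hb
  · rw [hb, heq]
    exact (φ.map_adj ha).symm

lemma Hom.surjOn_neighborSet_mergeVertices (φ : H →g G)
    (hls : ∀ x : V, Set.SurjOn φ (H.neighborSet x) (G.neighborSet (φ x)))
    (hne : y₁ ≠ y₂) (heq : φ y₁ = φ y₂) (a : {x : V // x ≠ y₂}) :
    Set.SurjOn (fun x : {x : V // x ≠ y₂} => φ x.1) ((mergeVertices H y₁ y₂).neighborSet a)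
      (G.neighborSet (φ a.1)) := by
  intro w hw
  obtain ⟨v, hav, rfl⟩ := hls a.1 hw
  by_cases hv : v = y₂
  · subst hv
    exact ⟨⟨y₁, hne⟩,
      mergeVertices_adj_of_adj_right hne (φ.ne_of_adj_of_map_eq hav heq) hav, heq⟩
  · exact ⟨⟨v, hv⟩, mergeVertices_adj_of_adj hav, rfl⟩

end SimpleGraph

/-- If `φ : H → G` is a locally surjective graph homomorphism (an emulator projection)
and `y₁ ≠ y₂` are two vertices of `H` with the same image under `φ`, then the
restriction of `φ` to `V(H) \ {y₂}` is a locally surjective graph homomorphism from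
the graph obtained from `H` by merging `y₂` into `y₁` to `G`. -/
theorem emulator_merge_vertices
    {V W : Type*} (H : SimpleGraph V) (G : SimpleGraph W) (φ : H →g G)
    (hls : ∀ x : V, Set.SurjOn ⇑φ (H.neighborSet x) (G.neighborSet (φ x)))
    (y₁ y₂ : V) (hne : y₁ ≠ y₂) (heq : φ y₁ = φ y₂) :
    (∀ a b : {x : V // x ≠ y₂},
        (mergeVertices H y₁ y₂).Adj a b → G.Adj (φ a.1) (φ b.1)) ∧
    (∀ a : {x : V // x ≠ y₂},
        Set.SurjOn (fun x : {x : V // x ≠ y₂} => φ x.1)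
          ((mergeVertices H y₁ y₂).neighborSet a)
          (G.neighborSet (φ a.1))) :=
  ⟨fun _ _ => φ.map_adj_of_mergeVertices_adj heq,
    φ.surjOn_neighborSet_mergeVertices hls hne heq⟩
end

section
/- Let H and G be simple graphs, let φ : H → G be a locally surjective graph homomorphism, and let x be a vertex of H. Let A and B be sets of vertices of H whose union is the neighborhood of x in H, and suppose that φ maps A onto the whole neighborhood of φ(x) in G and also maps B onto the whole neighborhood of φ(x) in G. Define the graph H' on the vertex set V(H) with one additional new vertex x⋆, where: two vertices of V(H) \ {x} are adjacent in H' if and only if they are adjacent in H; x is adjacent in H' exactly to the vertices of A; and x⋆ is adjacent in H' exactly to the vertices of B. Extend φ to φ' : H' → G by setting φ'(x⋆) = φ(x) and φ' = φ on V(H). Then φ' is a locally surjective graph homomorphism from H' to G. -/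
/-!
Let `π : Option V → V` send `x⋆` to `x` and fix every other vertex. When `A` and `B` lie in the
neighborhood of `x`, `π` is a graph homomorphism from the split graph onto `H`, and the extended
map is `φ ∘ π`, so it is a homomorphism. For local surjectivity: `π` maps the neighborhood of
`x⋆` onto `B` and that of `x` onto `A`, both of which `φ` maps onto the neighborhood of `φ x`;
at any other vertex `a`, `π` maps its new neighborhood onto its old one, because a lost edge
`a x` survives as `a x` or as `a x⋆` according as `a ∈ A` or `a ∈ B`.
-/

/-- Splitting the vertex `x` of `H` into `x` and a new vertex `x⋆` (modelled by `none`
in `Option V`, while every original vertex `a` is modelled by `some a`): two original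
vertices other than `x` are adjacent iff they are adjacent in `H`; the vertex `x` is
adjacent exactly to the vertices of `A`; and the new vertex `x⋆` is adjacent exactly
to the vertices of `B`. -/
def splitVertex {V : Type*} (H : SimpleGraph V) (x : V) (A B : Set V) :
    SimpleGraph (Option V) where
  Adj p q := p ≠ q ∧
    ((∃ a b : V, p = some a ∧ q = some b ∧
        ((a ≠ x ∧ b ≠ x ∧ H.Adj a b) ∨ (a = x ∧ b ∈ A) ∨ (b = x ∧ a ∈ A))) ∨
      (∃ b : V, p = none ∧ q = some b ∧ b ∈ B) ∨
      (∃ a : V, q = none ∧ p = some a ∧ a ∈ B))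
  symm := ⟨fun p q h => by
    obtain ⟨hne, h⟩ := h
    refine ⟨hne.symm, ?_⟩
    rcases h with ⟨a, b, hp, hq, hab⟩ | ⟨b, hp, hq, hb⟩ | ⟨a, hq, hp, ha⟩
    · exact Or.inl ⟨b, a, hq, hp, by tauto⟩
    · exact Or.inr (Or.inr ⟨b, hp, hq, hb⟩)
    · exact Or.inr (Or.inl ⟨a, hq, hp, ha⟩)⟩
  loopless := ⟨fun p h => h.1 rfl⟩

namespace SimpleGraph

variable {V : Type*} {H : SimpleGraph V} {x : V} {A B : Set V}

theorem splitVertex_adj_some_some {a b : V} :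
    (splitVertex H x A B).Adj (some a) (some b) ↔
      a ≠ b ∧ ((a ≠ x ∧ b ≠ x ∧ H.Adj a b) ∨ (a = x ∧ b ∈ A) ∨ (b = x ∧ a ∈ A)) := by
  simp [splitVertex]

theorem splitVertex_adj_none_some {b : V} :
    (splitVertex H x A B).Adj none (some b) ↔ b ∈ B := by
  simp [splitVertex]

theorem splitVertex_neighborSet_none :
    (splitVertex H x A B).neighborSet none = some '' B := by
  ext (_ | b)
  · simp
  · simp [splitVertex_adj_none_some]

theorem splitVertex_neighborSet_some_self (hxA : x ∉ A) (hxB : x ∉ B) :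
    (splitVertex H x A B).neighborSet (some x) = some '' A := by
  ext (_ | b)
  · simpa [splitVertex] using hxB
  · simp only [mem_neighborSet, splitVertex_adj_some_some, Set.mem_image, Option.some.injEq,
      exists_eq_right, ne_eq, not_true_eq_false, false_and, true_and, false_or]
    constructor
    · rintro ⟨-, hb | ⟨rfl, hb⟩⟩ <;> exact hb
    · exact fun hb => ⟨fun h => hxA (h ▸ hb), Or.inl hb⟩

theorem splitVertex_adj_getD (hA : A ⊆ H.neighborSet x) (hB : B ⊆ H.neighborSet x)
    {p q : Option V} (h : (splitVertex H x A B).Adj p q) : H.Adj (p.getD x) (q.getD x) := by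
  rcases h with ⟨-, ⟨a, b, rfl, rfl, ⟨-, -, hab⟩ | ⟨rfl, hb⟩ | ⟨rfl, ha⟩⟩ |
      ⟨b, rfl, rfl, hb⟩ | ⟨a, rfl, rfl, ha⟩⟩
  exacts [hab, hA hb, (hA ha).symm, hB hb, (hB ha).symm]

def splitVertexHom (hA : A ⊆ H.neighborSet x) (hB : B ⊆ H.neighborSet x) :
    splitVertex H x A B →g H where
  toFun q := q.getD x
  map_rel' := splitVertex_adj_getD hA hB

theorem surjOn_getD_splitVertex_neighborSet {a : V} (hax : a ≠ x)
    (hAB : H.neighborSet x ⊆ A ∪ B) :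
    Set.SurjOn (·.getD x) ((splitVertex H x A B).neighborSet (some a)) (H.neighborSet a) := by
  intro c hc
  by_cases hcx : c = x
  · subst hcx
    rcases hAB (H.adj_symm hc) with haA | haB
    · exact ⟨some c, splitVertex_adj_some_some.2 ⟨hax, Or.inr (Or.inr ⟨rfl, haA⟩)⟩, rfl⟩
    · exact ⟨none, (splitVertex_adj_none_some.2 haB).symm, rfl⟩
  · exact ⟨some c, splitVertex_adj_some_some.2 ⟨H.ne_of_adj hc, Or.inl ⟨hax, hcx, hc⟩⟩, rfl⟩

end SimpleGraph

open SimpleGraph in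
/-- Vertex splitting in an emulator: let `φ : H → G` be a locally surjective graph
homomorphism, `x` a vertex of `H`, and `A, B` sets of vertices whose union is the
neighborhood of `x` in `H`, each of which is mapped by `φ` onto the whole neighborhood
of `φ x` in `G`. Extend `φ` to the split graph by sending the new vertex `x⋆` (i.e.
`none`) to `φ x`. Then the extended map is a locally surjective graph homomorphism
from the split graph to `G`. -/
theorem emulator_split_vertex
    {V W : Type*} (H : SimpleGraph V) (G : SimpleGraph W) (φ : H →g G)
    (hls : ∀ y : V, Set.SurjOn ⇑φ (H.neighborSet y) (G.neighborSet (φ y)))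
    (x : V) (A B : Set V) (hAB : A ∪ B = H.neighborSet x)
    (hA : Set.SurjOn ⇑φ A (G.neighborSet (φ x)))
    (hB : Set.SurjOn ⇑φ B (G.neighborSet (φ x))) :
    (∀ p q : Option V,
        (splitVertex H x A B).Adj p q →
          G.Adj (p.elim (φ x) ⇑φ) (q.elim (φ x) ⇑φ)) ∧
    (∀ p : Option V,
        Set.SurjOn (fun q : Option V => q.elim (φ x) ⇑φ)
          ((splitVertex H x A B).neighborSet p)
          (G.neighborSet (p.elim (φ x) ⇑φ))) := by
  have hAx : A ⊆ H.neighborSet x := hAB ▸ Set.subset_union_left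
  have hBx : B ⊆ H.neighborSet x := hAB ▸ Set.subset_union_right
  have hext : (fun q : Option V => q.elim (φ x) ⇑φ) = φ ∘ (·.getD x) :=
    funext fun q => by cases q <;> rfl
  have hsome (s : Set V) : Set.SurjOn (·.getD x) (some '' s) s :=
    fun b hb => ⟨some b, Set.mem_image_of_mem _ hb, rfl⟩
  refine ⟨fun p q h => congrFun hext p ▸ congrFun hext q ▸
    (φ.comp (splitVertexHom hAx hBx)).map_adj h, ?_⟩
  rintro (_ | a) <;> rw [hext]
  · exact splitVertex_neighborSet_none ▸ hB.comp (hsome B)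
  · rcases eq_or_ne a x with rfl | hax
    · have hxA : a ∉ A := fun h => H.notMem_neighborSet_self (hAx h)
      have hxB : a ∉ B := fun h => H.notMem_neighborSet_self (hBx h)
      exact splitVertex_neighborSet_some_self hxA hxB ▸ hA.comp (hsome A)
    · exact (hls a).comp (surjOn_getD_splitVertex_neighborSet hax hAB.ge)
end
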